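/- arXiv:2502.13483 — 2 statements merged into one kernel-verified Lean document; each statement's English description precedes it below -/
import Mathlib

section
/- If the selected arcs on a machine's complete graph (with a dummy node 0) form a single directed cycle through the dummy node visiting exactly the present mode intervals, and each selected arc (u,v) between modes enforces e_u + s_{uv} ≤ s_v with setup times s_{uv} ≥ 0, then the present intervals are pairwise non-overlapping. -/
/-- If the present mode intervals are ordered along a single cycle through the
dummy node, with each consecutive pair `(u,v)` satisfying
`e_u + s_{uv} ≤ s_v` and setup times `s_{uv} ≥ 0`, then the present intervals
are pairwise non-overlapping. -/
theorem stmt_12 {V : Type*} (r : ℕ) (π : Fin r → V) (hinj : Function.Injective π)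
    (s e : V → ℤ) (st : V → V → ℤ)
    (hse : ∀ v, s v ≤ e v) (hst : ∀ u v, 0 ≤ st u v)
    (hseq : ∀ k : ℕ, (h1 : k < r) → (h2 : k + 1 < r) →
      e (π ⟨k, h1⟩) + st (π ⟨k, h1⟩) (π ⟨k + 1, h2⟩) ≤ s (π ⟨k + 1, h2⟩)) :
    ∀ i j : Fin r, i ≠ j → e (π i) ≤ s (π j) ∨ e (π j) ≤ s (π i) := by
  have key : ∀ n : ℕ, ∀ i j : Fin r, j.val = i.val + n + 1 → e (π i) ≤ s (π j) := by
    intro n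
    induction n with
    | zero =>
      intro i j hij
      have h2 : i.val + 1 < r := hij ▸ j.isLt
      have := hseq i.val i.isLt h2
      have h0 := hst (π ⟨i.val, i.isLt⟩) (π ⟨i.val + 1, h2⟩)
      have : e (π ⟨i.val, i.isLt⟩) ≤ s (π ⟨i.val + 1, h2⟩) := by linarith
      have hi : i = ⟨i.val, i.isLt⟩ := rfl
      have hj : j = ⟨i.val + 1, h2⟩ := Fin.ext hij
      rw [hi, hj]; exact this
    | succ n ih =>
      intro i j hij
      have hm : i.val + n + 1 < r := by omega
      have h1 := ih i ⟨i.val + n + 1, hm⟩ rfl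
      have h2 : i.val + n + 1 + 1 < r := by omega
      have h3 := hseq (i.val + n + 1) hm h2
      have h0 := hst (π ⟨i.val + n + 1, hm⟩) (π ⟨i.val + n + 1 + 1, h2⟩)
      have hs := hse (π ⟨i.val + n + 1, hm⟩)
      have hj : j = ⟨i.val + n + 1 + 1, h2⟩ := Fin.ext (show j.val = i.val + n + 1 + 1 by omega)
      rw [hj]; linarith
  intro i j hij
  rcases lt_or_gt_of_ne (fun h => hij (Fin.ext h) : i.val ≠ j.val) with h | h
  · left; exact key (j.val - i.val - 1) i j (by omega)
  · right; exact key (i.val - j.val - 1) j i (by omega)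
end

section
/- A consecutive constraint is correctly enforced: if tasks i and k are both present on a machine and the circuit encoding forces arc (i,k) to be selected whenever both are present, and selected arcs impose end-before-start with zero setup, then in the induced sequence no present task is scheduled strictly between the end of i and the start of k. -/
lemma chain_le {V : Type*} (r : ℕ) (π : Fin r → V)
    (s e : V → ℤ) (hpos : ∀ c : Fin r, s (π c) < e (π c))
    (hseq : ∀ k : ℕ, (h1 : k < r) → (h2 : k + 1 < r) →
      e (π ⟨k, h1⟩) ≤ s (π ⟨k + 1, h2⟩)) :
    ∀ m n : ℕ, n < m → (hm : m < r) → (hn : n < r) →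
      e (π ⟨n, hn⟩) ≤ s (π ⟨m, hm⟩) := by
  intro m
  induction m with
  | zero => intro n h; omega
  | succ m ih =>
    intro n h hm hn
    rcases Nat.lt_succ_iff_lt_or_eq.mp h with h' | rfl
    · have hm' : m < r := Nat.lt_of_succ_lt hm
      exact le_of_lt (calc e (π ⟨n, hn⟩) ≤ s (π ⟨m, hm'⟩) := ih n h' hm' hn
        _ < e (π ⟨m, hm'⟩) := hpos _
        _ ≤ s (π ⟨m + 1, hm⟩) := hseq m hm' hm)
    · exact hseq n hn hm

/-- Consecutive constraint: if the present modes are sequenced by `π` with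
end-before-start between consecutive positions, all present intervals have
positive durations, and mode `k` at position `b` immediately follows mode `i`
at position `a` (the arc `(i,k)` is selected), then no third present mode `w`
satisfies `e_i ≤ s_w` and `e_w ≤ s_k`. -/
theorem stmt_13 {V : Type*} (r : ℕ) (π : Fin r → V) (hinj : Function.Injective π)
    (s e : V → ℤ) (hpos : ∀ c : Fin r, s (π c) < e (π c))
    (hseq : ∀ k : ℕ, (h1 : k < r) → (h2 : k + 1 < r) →
      e (π ⟨k, h1⟩) ≤ s (π ⟨k + 1, h2⟩))
    (a b : Fin r) (hab : (b : ℕ) = (a : ℕ) + 1) :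
    ∀ c : Fin r, c ≠ a → c ≠ b →
      ¬(e (π a) ≤ s (π c) ∧ e (π c) ≤ s (π b)) := by
  intro c hca hcb ⟨h1, h2⟩
  have hca' : (c : ℕ) ≠ (a : ℕ) := fun h => hca (Fin.ext h)
  have hcb' : (c : ℕ) ≠ (b : ℕ) := fun h => hcb (Fin.ext h)
  rcases lt_or_gt_of_ne hca' with hlt | hgt
  · -- c < a : e c ≤ s a < e a ≤ s c < e c
    have h3 : e (π ⟨(c : ℕ), c.isLt⟩) ≤ s (π ⟨(a : ℕ), a.isLt⟩) :=
      chain_le r π s e hpos hseq a c hlt a.isLt c.isLt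
    simp only [Fin.eta] at h3
    have := hpos c
    have := hpos a
    omega
  · -- c > a, c ≠ b, b = a+1 so c > b
    have hbc : (b : ℕ) < (c : ℕ) := by omega
    have h3 : e (π ⟨(b : ℕ), b.isLt⟩) ≤ s (π ⟨(c : ℕ), c.isLt⟩) :=
      chain_le r π s e hpos hseq c b hbc c.isLt b.isLt
    simp only [Fin.eta] at h3
    have := hpos c
    have := hpos b
    omega
end
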